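/- arXiv:2512.09474 — 3 statements merged into one kernel-verified Lean document; each statement's English description precedes it below -/
import Mathlib

section
/- For every even index 2k (k ∈ ℕ) and every v ∈ V = [-1,-1/2] ∪ [1/2,1], with s_{2k} := (1/2)e^{(2k+1)π} - 1, one has sin(ln 2) ≤ sin(ln(1 + s_{2k}|v|)) < 1, and consequently v·g(s_{2k}v) ≥ (1/4)s_{2k}·sin(ln 2), where g(w) = w·sin(ln(1+|w|)). -/
/-! Write `A = (2k+1)π`, so that `1 + s_{2k} = e^A / 2`. For `|v| ∈ [1/2, 1]` the number
`1 + s_{2k}|v|` lies between `(1 + s_{2k})/2` and `1 + s_{2k}`, so its logarithm is `A - y` with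
`y ∈ [log 2, 2 log 2] ⊆ (0, π/2)`. Since `sin (A - y) = sin y` and `sin` increases on `[0, π/2]`,
this gives `sin (log 2) ≤ sin (log (1 + s_{2k}|v|)) < 1`; the last bound then follows from
`v · g(s_{2k} v) = s_{2k} v² sin (log (1 + s_{2k}|v|))` and `v² ≥ 1/4`. -/

open Real Set

lemma abs_mem_Icc_of_mem_union_Icc {a b v : ℝ} (ha : 0 ≤ a)
    (hv : v ∈ Icc (-b) (-a) ∪ Icc a b) : |v| ∈ Icc a b := by
  rcases hv with ⟨hb, ha'⟩ | hab
  · rw [abs_of_nonpos (by linarith)]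
    exact ⟨by linarith, by linarith⟩
  · rwa [abs_of_nonneg (ha.trans hab.1)]

lemma log_one_add_mul_mem_Icc {c u : ℝ} (hc : 0 ≤ c) (hu : u ∈ Icc (1/2 : ℝ) 1) :
    log (1 + c * u) ∈ Icc (log (1 + c) - log 2) (log (1 + c)) := by
  have hpos : 0 < 1 + c * u := by nlinarith [hu.1]
  constructor
  · rw [← log_div (by positivity) two_ne_zero]
    exact log_le_log (by positivity) (by nlinarith [hu.1])
  · exact log_le_log hpos (by nlinarith [hu.2])

lemma log_one_half_mul_exp (x : ℝ) : log (1/2 * exp x) = x - log 2 := by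
  rw [log_mul (by norm_num) (exp_ne_zero x), log_exp, one_div, log_inv]
  ring

lemma sin_odd_mul_pi_sub (k : ℕ) (y : ℝ) : sin ((2 * k + 1) * π - y) = sin y := by
  have h : (2 * k + 1) * π - y = (π - y) + (k : ℤ) * (2 * π) := by push_cast; ring
  rw [h, sin_add_int_mul_two_pi, sin_pi_sub]

lemma two_mul_log_two_lt_pi_div_two : 2 * log 2 < π / 2 := by
  linarith [log_two_lt_d9, pi_gt_d2]

lemma sin_log_two_pos : 0 < sin (log 2) :=
  sin_pos_of_pos_of_lt_pi (log_pos one_lt_two)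
    (by linarith [two_mul_log_two_lt_pi_div_two, log_pos one_lt_two, pi_pos])

lemma sin_log_two_le_sin_and_sin_lt_one {y : ℝ} (hy : y ∈ Icc (log 2) (2 * log 2)) :
    sin (log 2) ≤ sin y ∧ sin y < 1 := by
  have hlog2 := log_pos one_lt_two
  have hπ := two_mul_log_two_lt_pi_div_two
  have hy_mem : y ∈ Icc (-(π / 2)) (π / 2) := ⟨by linarith [hy.1], by linarith [hy.2]⟩
  refine ⟨strictMonoOn_sin.monotoneOn ⟨by linarith, by linarith⟩ hy_mem hy.1, ?_⟩
  rw [← sin_pi_div_two]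
  exact strictMonoOn_sin hy_mem ⟨by linarith [pi_pos], le_rfl⟩ (by linarith [hy.2])

lemma sin_log_two_le_sin_and_sin_lt_one_of_mem_Icc (k : ℕ) {t : ℝ}
    (ht : t ∈ Icc ((2 * k + 1) * π - 2 * log 2) ((2 * k + 1) * π - log 2)) :
    sin (log 2) ≤ sin t ∧ sin t < 1 := by
  have h := sin_log_two_le_sin_and_sin_lt_one
    (y := (2 * k + 1) * π - t) ⟨by linarith [ht.2], by linarith [ht.1]⟩
  rwa [sin_odd_mul_pi_sub] at h

theorem stmt_3 (g : ℝ → ℝ) (hg : ∀ w, g w = w * Real.sin (Real.log (1 + |w|)))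
    (s : ℕ → ℝ) (hs : ∀ n : ℕ, s n = (1/2) * Real.exp ((n + 1) * π) - 1)
    (k : ℕ) (v : ℝ) (hv : v ∈ Set.Icc (-1 : ℝ) (-1/2) ∪ Set.Icc (1/2 : ℝ) 1) :
    Real.sin (Real.log 2) ≤ Real.sin (Real.log (1 + s (2 * k) * |v|)) ∧
    Real.sin (Real.log (1 + s (2 * k) * |v|)) < 1 ∧
    v * g (s (2 * k) * v) ≥ (1/4) * s (2 * k) * Real.sin (Real.log 2) := by
  have hsk : 1 + s (2 * k) = 1/2 * exp ((2 * k + 1) * π) := by rw [hs]; push_cast; ring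
  have hπ_le : π ≤ (2 * k + 1) * π := le_mul_of_one_le_left pi_pos.le (by simp)
  have hs_nonneg : 0 ≤ s (2 * k) := by
    linarith [add_one_le_exp ((2 * k + 1) * π), pi_gt_three]
  have hv_abs : |v| ∈ Icc (1/2 : ℝ) 1 :=
    abs_mem_Icc_of_mem_union_Icc (by norm_num) (by norm_num at hv ⊢; exact hv)
  have hlog := log_one_add_mul_mem_Icc hs_nonneg hv_abs
  rw [hsk, log_one_half_mul_exp] at hlog
  obtain ⟨hge, hlt⟩ := sin_log_two_le_sin_and_sin_lt_one_of_mem_Icc k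
    ⟨by linarith [hlog.1], hlog.2⟩
  refine ⟨hge, hlt, ?_⟩
  rw [hg, abs_mul, abs_of_nonneg hs_nonneg]
  calc 1/4 * s (2 * k) * sin (log 2) = (1/2) ^ 2 * (s (2 * k) * sin (log 2)) := by ring
    _ ≤ |v| ^ 2 * (s (2 * k) * sin (log (1 + s (2 * k) * |v|))) := by
        gcongr
        · exact mul_nonneg hs_nonneg sin_log_two_pos.le
        · exact hv_abs.1
    _ = v * (s (2 * k) * v * sin (log (1 + s (2 * k) * |v|))) := by rw [sq_abs]; ring
end

section
/- For every odd index 2k-1 (k ≥ 1) and every v ∈ V = [-1,-1/2] ∪ [1/2,1], with s_{2k-1} := (1/2)e^{2kπ} - 1, one has sin(ln(1 + s_{2k-1}|v|)) ≤ -sin(ln 2), and consequently v·g(-s_{2k-1}v) ≥ (1/4)s_{2k-1}·sin(ln 2), where g(w) = w·sin(ln(1+|w|)). -/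
/-!
With `E = exp (2kπ)` we have `s (2k-1) = E/2 - 1`, so for `|v| ∈ [1/2, 1]` the number
`1 + s (2k-1) |v|` lies in `[E/4, E/2]` and its logarithm in `[2kπ - 2 log 2, 2kπ - log 2]`.
Since `2 log 2 < π/2`, reducing mod `2π` lands in `[-π/2, -log 2]`, where `sin` is increasing;
hence the sine is at most `sin (-log 2)`. The second claim follows because
`v g(-s v) = -s v² sin(log(1 + s|v|))` and `v² ≥ 1/4`.
-/

open Real Set

lemma two_mul_log_two_le_pi_div_two : 2 * log 2 ≤ π / 2 := by
  linarith [log_two_lt_d9, pi_gt_three]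

lemma sin_le_neg_sin_of_mem_Icc {a x : ℝ} (n : ℤ) (ha : 0 ≤ a)
    (hx : x ∈ Icc (n * (2 * π) - π / 2) (n * (2 * π) - a)) : sin x ≤ -sin a := by
  obtain ⟨hlo, hhi⟩ := hx
  rw [← sin_sub_int_mul_two_pi x n, ← sin_neg]
  exact strictMonoOn_sin.monotoneOn ⟨by linarith, by linarith [pi_pos]⟩
    ⟨by linarith, by linarith [pi_pos]⟩ (by linarith)

lemma log_one_add_mul_mem_Icc_s4 {E t : ℝ} (hE : 2 ≤ E) (ht : t ∈ Icc (1 / 2 : ℝ) 1) :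
    log (1 + (E / 2 - 1) * t) ∈ Icc (log E - 2 * log 2) (log E - log 2) := by
  obtain ⟨ht₁, ht₂⟩ := ht
  have hlower : E / 4 ≤ 1 + (E / 2 - 1) * t := by nlinarith
  have hupper : 1 + (E / 2 - 1) * t ≤ E / 2 := by nlinarith
  have hlog4 : log 4 = 2 * log 2 := by
    rw [show (4 : ℝ) = 2 ^ 2 by norm_num, log_pow, Nat.cast_ofNat]
  constructor
  · calc log E - 2 * log 2 = log (E / 4) := by rw [log_div (by positivity) (by norm_num), hlog4]
      _ ≤ _ := log_le_log (by positivity) hlower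
  · calc log (1 + (E / 2 - 1) * t) ≤ log (E / 2) := log_le_log (by linarith) hupper
      _ = log E - log 2 := log_div (by positivity) (by norm_num)

lemma two_le_exp_two_mul_pi {k : ℕ} (hk : 1 ≤ k) : 2 ≤ exp (2 * k * π) := by
  have : (1 : ℝ) ≤ 2 * k * π := by nlinarith [pi_gt_three, (Nat.one_le_cast (α := ℝ)).mpr hk]
  linarith [add_one_le_exp (2 * k * π)]

lemma sin_log_one_add_mul_le {k : ℕ} (hk : 1 ≤ k) {t : ℝ} (ht : t ∈ Icc (1 / 2 : ℝ) 1) :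
    sin (log (1 + (exp (2 * k * π) / 2 - 1) * t)) ≤ -sin (log 2) := by
  obtain ⟨hlo, hhi⟩ := log_one_add_mul_mem_Icc_s4 (two_le_exp_two_mul_pi hk) ht
  rw [log_exp] at hlo hhi
  refine sin_le_neg_sin_of_mem_Icc k (log_nonneg one_le_two) ⟨?_, ?_⟩ <;> push_cast <;>
    linarith [two_mul_log_two_le_pi_div_two]

theorem stmt_4 (g : ℝ → ℝ) (hg : ∀ w, g w = w * Real.sin (Real.log (1 + |w|)))
    (s : ℕ → ℝ) (hs : ∀ n : ℕ, s n = (1/2) * Real.exp ((n + 1) * π) - 1)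
    (k : ℕ) (hk : 1 ≤ k)
    (v : ℝ) (hv : v ∈ Set.Icc (-1 : ℝ) (-1/2) ∪ Set.Icc (1/2 : ℝ) 1) :
    Real.sin (Real.log (1 + s (2 * k - 1) * |v|)) ≤ -Real.sin (Real.log 2) ∧
    v * g (-(s (2 * k - 1)) * v) ≥ (1/4) * s (2 * k - 1) * Real.sin (Real.log 2) := by
  have hsk : s (2 * k - 1) = exp (2 * k * π) / 2 - 1 := by
    rw [hs, Nat.cast_sub (by omega)]
    push_cast
    ring_nf
  have hv' : |v| ∈ Icc (1 / 2 : ℝ) 1 := by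
    rcases hv with ⟨h₁, h₂⟩ | ⟨h₁, h₂⟩
    · rw [abs_of_neg (by linarith)]; constructor <;> linarith
    · rw [abs_of_pos (by linarith)]; exact ⟨h₁, h₂⟩
  have hsin : sin (log (1 + s (2 * k - 1) * |v|)) ≤ -sin (log 2) := by
    rw [hsk]; exact sin_log_one_add_mul_le hk hv'
  refine ⟨hsin, ?_⟩
  have hs_nonneg : 0 ≤ s (2 * k - 1) := by
    rw [hsk]; linarith [two_le_exp_two_mul_pi hk]
  have hsin_log_two : 0 < sin (log 2) :=
    sin_pos_of_pos_of_lt_pi (log_pos one_lt_two) (by linarith [log_two_lt_d9, pi_gt_three])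
  have hv_sq : 1 / 4 ≤ v ^ 2 := by nlinarith [sq_abs v, hv'.1]
  rw [hg, abs_mul, abs_neg, abs_of_nonneg hs_nonneg]
  calc (1 / 4) * s (2 * k - 1) * sin (log 2) ≤ v ^ 2 * s (2 * k - 1) * sin (log 2) := by gcongr
    _ ≤ v ^ 2 * s (2 * k - 1) * -sin (log (1 + s (2 * k - 1) * |v|)) := by gcongr; linarith
    _ = _ := by ring
end

section
/- Let f : ℝ × ℝ → ℝ be continuous, g(w) = w·sin(ln(1+|w|)), and let P, K ⊂ ℝ be nonempty compact sets. Define V = [-1,-1/2] ∪ [1/2,1] and χ(s) = min{ v·f(ρ,ξ) + v·g(sv) : ρ ∈ P, ξ ∈ K, v ∈ V }. Then sup_{s ≥ 0} χ(-s) = +∞. -/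
/-!
Since `g` is odd, `v * g (-s * v) = -s v² sin (log (1 + s|v|))`. Choose `s` with
`log (1 + s) = 2πn + 3π/2`; for `|v| ∈ [1/2, 1]` the angle `log (1 + s|v|)` lies in
`[log (1 + s) - log 2, log (1 + s)]`, an interval of length `log 2 < π/3` ending at a minimum of
`sin`, where `sin ≤ -1/2`. Hence every element of the set defining `χ (-s)` is at least
`s/8 - sup |f|`, which is unbounded in `n`.
-/

open Real Set

lemma sin_le_neg_half_of_mem_Icc (n : ℤ) {θ : ℝ}
    (hθ : θ ∈ Icc (2 * π * n + 7 * π / 6) (2 * π * n + 3 * π / 2)) : sin θ ≤ -(1 / 2) := by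
  have hπ := pi_pos
  have hperiod : sin θ = -sin (θ - n * (2 * π) - π) := by
    rw [sin_sub_pi, sin_sub_int_mul_two_pi, neg_neg]
  have hmono : sin (π / 6) ≤ sin (θ - n * (2 * π) - π) :=
    sin_le_sin_of_le_of_le_pi_div_two (by linarith) (by linarith [hθ.2]) (by linarith [hθ.1])
  rw [sin_pi_div_six] at hmono
  linarith

lemma log_one_add_mul_mem_Icc_s7 {s a : ℝ} (hs : 0 ≤ s) (ha : a ∈ Icc (1 / 2 : ℝ) 1) :
    log (1 + s * a) ∈ Icc (log (1 + s) - log 2) (log (1 + s)) := by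
  obtain ⟨ha₁, ha₂⟩ := ha
  refine ⟨?_, log_le_log (by positivity) (by nlinarith)⟩
  rw [← log_div (by positivity) two_ne_zero]
  exact log_le_log (by positivity) (by nlinarith)

lemma exists_sin_le_neg_half_near_log_one_add (C : ℝ) :
    ∃ s, 0 ≤ s ∧ C ≤ s ∧
      ∀ θ ∈ Icc (log (1 + s) - log 2) (log (1 + s)), sin θ ≤ -(1 / 2) := by
  have hπ := pi_gt_three
  set n : ℕ := ⌈C⌉₊
  set t := 2 * π * n + 3 * π / 2 with ht
  have hn : C ≤ n := Nat.le_ceil C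
  have htn : (n : ℝ) ≤ t := by nlinarith [n.cast_nonneg (α := ℝ)]
  have hlog : log (1 + (exp t - 1)) = t := by rw [add_sub_cancel, log_exp]
  refine ⟨exp t - 1, ?_, ?_, fun θ hθ => sin_le_neg_half_of_mem_Icc n ?_⟩
  · linarith [add_one_le_exp t, n.cast_nonneg (α := ℝ)]
  · linarith [add_one_le_exp t]
  · rw [hlog] at hθ
    have hlog2 : log 2 < π / 3 := by linarith [log_two_lt_d9]
    push_cast
    exact ⟨by linarith [hθ.1], hθ.2⟩

lemma abs_mem_Icc_of_mem_union {v : ℝ}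
    (hv : v ∈ Icc (-1 : ℝ) (-1 / 2) ∪ Icc (1 / 2 : ℝ) 1) : |v| ∈ Icc (1 / 2 : ℝ) 1 := by
  rcases hv with ⟨h₁, h₂⟩ | ⟨h₁, h₂⟩
  · rw [abs_of_neg (by linarith)]; constructor <;> linarith
  · rw [abs_of_pos (by linarith)]; exact ⟨h₁, h₂⟩

lemma div_eight_le_mul_neg_mul_sin_log {s v : ℝ} (hs : 0 ≤ s)
    (hsin : ∀ θ ∈ Icc (log (1 + s) - log 2) (log (1 + s)), sin θ ≤ -(1 / 2))
    (hv : |v| ∈ Icc (1 / 2 : ℝ) 1) :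
    s / 8 ≤ v * (-s * v * sin (log (1 + |-s * v|))) := by
  rw [abs_mul, abs_neg, abs_of_nonneg hs]
  have hθ := hsin _ (log_one_add_mul_mem_Icc_s7 hs hv)
  have hv_sq : 1 / 4 ≤ v ^ 2 := by nlinarith [sq_abs v, hv.1]
  have hsv : s * (1 / 4) ≤ s * v ^ 2 := mul_le_mul_of_nonneg_left hv_sq hs
  nlinarith [mul_nonneg hs (sq_nonneg v)]

theorem stmt_7 (f : ℝ × ℝ → ℝ) (hf : Continuous f)
    (g : ℝ → ℝ) (hg : ∀ w, g w = w * Real.sin (Real.log (1 + |w|)))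
    (P K : Set ℝ) (hPc : IsCompact P) (hPne : P.Nonempty)
    (hKc : IsCompact K) (hKne : K.Nonempty)
    (V : Set ℝ) (hV : V = Set.Icc (-1 : ℝ) (-1/2) ∪ Set.Icc (1/2 : ℝ) 1)
    (χ : ℝ → ℝ)
    (hχ : ∀ s : ℝ, χ s =
      sInf {y : ℝ | ∃ ρ ∈ P, ∃ ξ ∈ K, ∃ v ∈ V, y = v * f (ρ, ξ) + v * g (s * v)}) :
    ∀ M : ℝ, ∃ s : ℝ, 0 ≤ s ∧ M < χ (-s) := by
  intro M
  obtain ⟨B, hB⟩ := (hPc.prod hKc).exists_bound_of_continuousOn hf.continuousOn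
  obtain ⟨s, hs₀, hsM, hsin⟩ := exists_sin_le_neg_half_near_log_one_add (8 * (M + B + 1))
  obtain ⟨ρ₀, hρ₀⟩ := hPne
  obtain ⟨ξ₀, hξ₀⟩ := hKne
  have hone : (1 : ℝ) ∈ V := by rw [hV]; right; norm_num
  refine ⟨s, hs₀, ?_⟩
  rw [hχ]
  refine lt_of_lt_of_le (by linarith : M < s / 8 - B) (le_csInf ⟨_, ρ₀, hρ₀, ξ₀, hξ₀, 1, hone, rfl⟩ ?_)
  rintro _ ⟨ρ, hρ, ξ, hξ, v, hv, rfl⟩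
  have hv' := abs_mem_Icc_of_mem_union (hV ▸ hv)
  have hf' : |v * f (ρ, ξ)| ≤ B := by
    rw [abs_mul]
    exact (mul_le_of_le_one_left (abs_nonneg _) hv'.2).trans (hB _ ⟨hρ, hξ⟩)
  have hg' := div_eight_le_mul_neg_mul_sin_log hs₀ hsin hv'
  rw [← hg] at hg'
  linarith [neg_abs_le (v * f (ρ, ξ))]
end
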